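/- arXiv:2205.07327 — 2 statements merged into one kernel-verified Lean document; each statement's English description precedes it below -/
import Mathlib

section
/- For every r ∈ I_1^m ∪ I_2^m and every q with q_n ≠ 0, the weighted divergence of the vector field J_r vanishes: Σ_{j=1}^n ∂J_r^j/∂q_j − (m/2) q_n^{−1} J_r^n = 0. (Equivalently, the zero-order term of the minimal quantization of W_r = Σ_j J_r^j p_j vanishes.) -/
noncomputable section

open scoped BigOperators

namespace P3

/-- Extended coordinates: `q_0 = 1`, `q_k = 0` for `k < 0` or `k > n`. -/
def qe (n : ℕ) (q : Fin n → ℝ) (k : ℤ) : ℝ :=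
  if h : 1 ≤ k ∧ k ≤ (n : ℤ) then q ⟨(k - 1).toNat, by omega⟩
  else if k = 0 then 1 else 0

/-- The special conformal Killing tensor `L` in Viète coordinates. -/
def Lmat (n : ℕ) (q : Fin n → ℝ) : Matrix (Fin n) (Fin n) ℝ :=
  Matrix.of fun i j => if (j : ℕ) = 0 then -q i else if (j : ℕ) = (i : ℕ) + 1 then 1 else 0

/-- The metric `G_0` (case `m = 0`) in Viète coordinates. -/
def G0mat (n : ℕ) (q : Fin n → ℝ) : Matrix (Fin n) (Fin n) ℝ :=
  Matrix.of fun i j => qe n q ((i : ℤ) + (j : ℤ) + 1 - (n : ℤ))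

/-- The contravariant metric `G = L^m G_0`. -/
def Gmat (n m : ℕ) (q : Fin n → ℝ) : Matrix (Fin n) (Fin n) ℝ :=
  (Lmat n q) ^ m * G0mat n q

/-- Killing tensors `K_r = Σ_{k=0}^{r-1} q_k L^{r-1-k}` (so `K_1 = Id`). -/
def Kmat (n : ℕ) (q : Fin n → ℝ) (r : ℕ) : Matrix (Fin n) (Fin n) ℝ :=
  ∑ k ∈ Finset.range r, qe n q (k : ℤ) • (Lmat n q) ^ (r - 1 - k)

/-- `A_r = K_r G`, with `A_i = 0` for `i ≤ 0` or `i > n`. -/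
def Amat (n m : ℕ) (q : Fin n → ℝ) (r : ℤ) : Matrix (Fin n) (Fin n) ℝ :=
  if 1 ≤ r ∧ r ≤ (n : ℤ) then Kmat n q r.toNat * Gmat n m q else 0

/-- Entries of `A_r` with 1-based integer indices (0 outside the valid range). -/
def Aent (n m : ℕ) (q : Fin n → ℝ) (r k j : ℤ) : ℝ :=
  if hk : 1 ≤ k ∧ k ≤ (n : ℤ) then
    if hj : 1 ≤ j ∧ j ≤ (n : ℤ) then
      Amat n m q r ⟨(k - 1).toNat, by omega⟩ ⟨(j - 1).toNat, by omega⟩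
    else 0
  else 0

/-- `r ∈ I_1^m = {2,…,n−m+1} ∩ {2,…,n}`. -/
def inI1 (n m : ℕ) (r : ℤ) : Prop := 2 ≤ r ∧ r ≤ (n : ℤ) - m + 1 ∧ r ≤ (n : ℤ)

/-- `r ∈ I_2^m = {n−m+2,…,n}`. -/
def inI2 (n m : ℕ) (r : ℤ) : Prop := (n : ℤ) - m + 2 ≤ r ∧ r ≤ (n : ℤ)

instance (n m : ℕ) (r : ℤ) : Decidable (inI1 n m r) := by unfold inI1; infer_instance
instance (n m : ℕ) (r : ℤ) : Decidable (inI2 n m r) := by unfold inI2; infer_instance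

/-- Components `J_r^k` (1-based integer component index `k`) of the Killing
vector fields `J_r`; `J_1 = 0` and `J_i = 0` for `i ≤ 0` or `i > n`. -/
def Jcomp (n m : ℕ) (r : ℤ) (q : Fin n → ℝ) (k : ℤ) : ℝ :=
  if r = 1 then 0
  else if inI1 n m r then
    if (n : ℤ) + 2 - m - r ≤ k ∧ k ≤ (n : ℤ) - m then
      (((n : ℤ) + 1 - m - k : ℤ) : ℝ) * qe n q ((m : ℤ) + r - n - 2 + k)
    else 0
  else if inI2 n m r then
    if (n : ℤ) + 2 - m ≤ k ∧ k ≤ 2 * (n : ℤ) + 2 - m - r then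
      -((((n : ℤ) + 1 - m - k : ℤ) : ℝ) * qe n q ((m : ℤ) + r - n - 2 + k))
    else 0
  else 0

/-- Basic separable potentials for `α ≥ n-1`:  `Vup d = V^{(n-1+d)}`,
via the forward recursion `V_r^{(α+1)} = V_{r+1}^{(α)} − q_r V_1^{(α)}`. -/
def Vup (n : ℕ) (q : Fin n → ℝ) : ℕ → ℤ → ℝ
  | 0 => fun r => if r = 1 then -1 else 0
  | d + 1 => fun r =>
      if 1 ≤ r ∧ r ≤ (n : ℤ) then Vup n q d (r + 1) - qe n q r * Vup n q d 1 else 0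

/-- Basic separable potentials for `α ≤ 0`: `Vdn d = V^{(-d)}`, via the inverse
recursion `V_1^{(α)} = −q_n^{−1} V_n^{(α+1)}`, `V_{r+1}^{(α)} = V_r^{(α+1)} + q_r V_1^{(α)}`. -/
def Vdn (n : ℕ) (q : Fin n → ℝ) : ℕ → ℤ → ℝ
  | 0 => fun r => if r = (n : ℤ) then -1 else 0
  | d + 1 => fun r =>
      if 1 ≤ r ∧ r ≤ (n : ℤ) then
        (if r = 1 then 0 else Vdn n q d (r - 1))
          + qe n q (r - 1) * (-(qe n q (n : ℤ))⁻¹ * Vdn n q d (n : ℤ))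
      else 0

/-- The basic separable potential `V_r^{(α)}` (1-based integer index `r`). -/
def Vpot (n : ℕ) (q : Fin n → ℝ) (α r : ℤ) : ℝ :=
  if 0 ≤ α then
    if α ≤ (n : ℤ) - 1 then (if r = (n : ℤ) - α then -1 else 0)
    else Vup n q (α - ((n : ℤ) - 1)).toNat r
  else Vdn n q (-α).toNat r

/-- The basic separable vector potential component `(P_r^{(γ)})^j`
(1-based integer indices `r`, `j`). -/
def Ppot (n : ℕ) (q : Fin n → ℝ) (γ r j : ℤ) : ℝ :=
  -∑ s ∈ Finset.range r.toNat, qe n q (s : ℤ) * Vpot n q (r + γ - (s : ℤ) - 1) j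

/-- Partial derivative `∂f/∂q_j` of a real-valued function on `ℝ^n`. -/
def pd (n : ℕ) (j : Fin n) (f : (Fin n → ℝ) → ℝ) (x : Fin n → ℝ) : ℝ :=
  fderiv ℝ f x (Pi.single j 1)

/-- Partial derivative `∂f/∂q_j` of a complex-valued function on `ℝ^n`. -/
def pdC (n : ℕ) (j : Fin n) (f : (Fin n → ℝ) → ℂ) (x : Fin n → ℝ) : ℂ :=
  fderiv ℝ f x (Pi.single j 1)

/-- Partial derivative in the `q_i` direction on phase space `ℝ^{2n}`. -/
def pdq (n : ℕ) (i : Fin n) (f : ((Fin n → ℝ) × (Fin n → ℝ)) → ℝ)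
    (x : (Fin n → ℝ) × (Fin n → ℝ)) : ℝ :=
  fderiv ℝ f x (Pi.single i 1, 0)

/-- Partial derivative in the `p_i` direction on phase space `ℝ^{2n}`. -/
def pdp (n : ℕ) (i : Fin n) (f : ((Fin n → ℝ) × (Fin n → ℝ)) → ℝ)
    (x : (Fin n → ℝ) × (Fin n → ℝ)) : ℝ :=
  fderiv ℝ f x (0, Pi.single i 1)

/-- Canonical Poisson bracket on `ℝ^{2n}`. -/
def pbr (n : ℕ) (f g : ((Fin n → ℝ) × (Fin n → ℝ)) → ℝ)
    (x : (Fin n → ℝ) × (Fin n → ℝ)) : ℝ :=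
  ∑ i : Fin n, (pdq n i f x * pdp n i g x - pdp n i f x * pdq n i g x)

/-- Classical geodesic Stäckel Hamiltonian `E_r = ½ pᵀ A_r p`. -/
def Ecl (n m : ℕ) (r : ℤ) (x : (Fin n → ℝ) × (Fin n → ℝ)) : ℝ :=
  (1 / 2) * ∑ k : Fin n, ∑ j : Fin n,
    x.2 k * Aent n m x.1 r ((k : ℤ) + 1) ((j : ℤ) + 1) * x.2 j

/-- Classical quasi-Stäckel term `W_r = Σ_j J_r^j p_j`. -/
def Wcl (n m : ℕ) (r : ℤ) (x : (Fin n → ℝ) × (Fin n → ℝ)) : ℝ :=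
  ∑ j : Fin n, Jcomp n m r x.1 ((j : ℤ) + 1) * x.2 j

/-- Geodesic quasi-Stäckel Hamiltonian `𝓔_r = E_r + W_r`. -/
def EWcl (n m : ℕ) (r : ℤ) (x : (Fin n → ℝ) × (Fin n → ℝ)) : ℝ :=
  Ecl n m r x + Wcl n m r x

/-- Classical magnetic term `M_r^{(γ)} = Σ_k (P_r^{(γ)})^k p_k`. -/
def Mcl (n : ℕ) (γ r : ℤ) (x : (Fin n → ℝ) × (Fin n → ℝ)) : ℝ :=
  ∑ k : Fin n, Ppot n x.1 γ r ((k : ℤ) + 1) * x.2 k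

/-- The open set `Ω = {q : q_n ≠ 0}`. -/
def Omega (n : ℕ) : Set (Fin n → ℝ) := {x | qe n x (n : ℤ) ≠ 0}

/-- Minimal quantization `Ê_r` of the geodesic part, written with the
derivatives to the right. -/
def Eop (n m : ℕ) (hb : ℝ) (r : ℤ) (f : (Fin n → ℝ) → ℂ) (x : Fin n → ℝ) : ℂ :=
  -(((hb : ℂ)) ^ 2 / 2) *
    ((∑ k : Fin n, ∑ j : Fin n,
        ((Aent n m x r ((k : ℤ) + 1) ((j : ℤ) + 1) : ℝ) : ℂ) *
          pdC n k (fun y => pdC n j f y) x)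
      + (∑ j : Fin n,
          ((∑ k : Fin n, pd n k (fun y => Aent n m y r ((k : ℤ) + 1) ((j : ℤ) + 1)) x : ℝ) : ℂ) *
            pdC n j f x)
      - ((m : ℂ) / 2) * (((qe n x (n : ℤ) : ℝ) : ℂ))⁻¹ *
          ∑ j : Fin n, ((Aent n m x r (n : ℤ) ((j : ℤ) + 1) : ℝ) : ℂ) * pdC n j f x)

/-- Minimal quantization `Ŵ_r = −iħ Σ_j J_r^j ∂_j`. -/
def Wop (n m : ℕ) (hb : ℝ) (r : ℤ) (f : (Fin n → ℝ) → ℂ) (x : Fin n → ℝ) : ℂ :=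
  -(Complex.I * (hb : ℂ)) * ∑ j : Fin n, ((Jcomp n m r x ((j : ℤ) + 1) : ℝ) : ℂ) * pdC n j f x

/-- Quantized geodesic quasi-Stäckel Hamiltonian `𝓔̂_r = Ê_r + Ŵ_r`. -/
def EWop (n m : ℕ) (hb : ℝ) (r : ℤ) (f : (Fin n → ℝ) → ℂ) (x : Fin n → ℝ) : ℂ :=
  Eop n m hb r f x + Wop n m hb r f x

/-- Minimal quantization `M̂_r^{(γ)}` of the magnetic term. -/
def Mop (n m : ℕ) (hb : ℝ) (γ r : ℤ) (f : (Fin n → ℝ) → ℂ) (x : Fin n → ℝ) : ℂ :=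
  -(Complex.I * (hb : ℂ) / 2) *
    ((∑ j : Fin n, pdC n j (fun y => ((Ppot n y γ r ((j : ℤ) + 1) : ℝ) : ℂ) * f y) x)
      + (∑ j : Fin n, ((Ppot n x γ r ((j : ℤ) + 1) : ℝ) : ℂ) * pdC n j f x)
      - ((m : ℂ) / 2) * (((qe n x (n : ℤ) : ℝ) : ℂ))⁻¹ *
          ((Ppot n x γ r (n : ℤ) : ℝ) : ℂ) * f x)

end P3

/-!
Every component of `J_r` is an integer multiple of a single extended coordinate,
`J_r^k = c_r(k) q_{k+s}`, with a shift `s = m + r - n - 2` independent of `k`. Hence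
`∂J_r^k/∂q_k` vanishes for all `k` unless `s = 0`, and then the divergence is `Σ_k c_r(k)`.
If `s ≠ 0` the weighted term vanishes too, since `J_r^n = 0` whenever `m ≠ 0`. If `s = 0`,
i.e. `r = n + 2 - m`, the coefficients run through `1, …, m - 1`, so the divergence is
`m(m-1)/2`, while `(m/2) q_n⁻¹ J_r^n = (m/2)(m-1)`.
-/

namespace P3

def Jcoef (n m : ℕ) (r k : ℤ) : ℝ :=
  if r = 1 then 0
  else if inI1 n m r then
    if (n : ℤ) + 2 - m - r ≤ k ∧ k ≤ (n : ℤ) - m then (((n : ℤ) + 1 - m - k : ℤ) : ℝ) else 0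
  else if inI2 n m r then
    if (n : ℤ) + 2 - m ≤ k ∧ k ≤ 2 * (n : ℤ) + 2 - m - r then
      -(((n : ℤ) + 1 - m - k : ℤ) : ℝ)
    else 0
  else 0

section

variable {n m : ℕ}

lemma Jcomp_eq_Jcoef_mul_qe (r : ℤ) (q : Fin n → ℝ) (k : ℤ) :
    Jcomp n m r q k = Jcoef n m r k * qe n q ((m : ℤ) + r - n - 2 + k) := by
  unfold Jcomp Jcoef
  split_ifs <;> ring

lemma pd_const_mul_qe (j : Fin n) (c : ℝ) (t : ℤ) (x : Fin n → ℝ) :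
    pd n j (fun y => c * qe n y t) x = if t = (j : ℤ) + 1 then c else 0 := by
  unfold pd
  by_cases ht : 1 ≤ t ∧ t ≤ (n : ℤ)
  · have hlin : (fun y => c * qe n y t) = ⇑(c • ContinuousLinearMap.proj (R := ℝ)
        (φ := fun _ : Fin n => ℝ) ⟨(t - 1).toNat, by omega⟩) := by
      ext y
      simp [qe, ht]
    rw [hlin, ContinuousLinearMap.fderiv]
    simp only [smul_apply, ContinuousLinearMap.proj_apply, Pi.single_apply,
      Fin.ext_iff, smul_eq_mul, mul_ite, mul_one, mul_zero]
    split_ifs <;> first | (exfalso; omega) | ring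
  · have hconst : (fun y => c * qe n y t) = fun _ => c * qe n 0 t := by
      ext y
      simp [qe, ht]
    rw [hconst, fderiv_fun_const, if_neg (by omega)]
    rfl

lemma pd_Jcomp_diag (r : ℤ) (j : Fin n) (q : Fin n → ℝ) :
    pd n j (fun y => Jcomp n m r y ((j : ℤ) + 1)) q
      = if (m : ℤ) + r = n + 2 then Jcoef n m r ((j : ℤ) + 1) else 0 := by
  simp only [Jcomp_eq_Jcoef_mul_qe, pd_const_mul_qe]
  exact if_congr (by omega) rfl rfl

lemma Jcoef_top_eq_zero {r : ℤ} (hm : m ≠ 0) (hr : (m : ℤ) + r ≠ n + 2) :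
    Jcoef n m r n = 0 := by
  unfold Jcoef
  split_ifs <;> (try simp only [inI1, inI2] at *) <;> first | rfl | omega

lemma Jcoef_critical (hmn : m ≤ n) (k : ℤ) :
    Jcoef n m ((n : ℤ) + 2 - m) k
      = if (n : ℤ) + 2 - m ≤ k ∧ k ≤ n then ((k - ((n : ℤ) + 1 - m) : ℤ) : ℝ) else 0 := by
  unfold Jcoef
  split_ifs <;> (try simp only [inI1, inI2] at *) <;> first | omega | (push_cast; ring)

lemma mul_Jcoef_critical_top (hmn : m ≤ n) :
    m * Jcoef n m ((n : ℤ) + 2 - m) n = m * (m - 1) := by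
  rw [Jcoef_critical hmn]
  split_ifs with h
  · push_cast
    ring
  · obtain rfl | rfl : m = 0 ∨ m = 1 := by omega
    all_goals simp

lemma sum_range_ramp (a b : ℕ) :
    ∑ i ∈ Finset.range (a + b), (if a ≤ i then (i : ℝ) + 1 - a else 0) = b * (b + 1) / 2 := by
  induction b with
  | zero =>
    simp only [add_zero, CharP.cast_eq_zero, zero_mul, zero_div]
    exact Finset.sum_eq_zero fun i hi => if_neg (by simp at hi; omega)
  | succ b ih =>
    rw [← add_assoc, Finset.sum_range_succ, ih, if_pos (by omega)]
    push_cast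
    ring

lemma sum_Jcoef_critical (hmn : m ≤ n) :
    ∑ j : Fin n, Jcoef n m ((n : ℤ) + 2 - m) ((j : ℤ) + 1) = m * (m - 1) / 2 := by
  rw [Fin.sum_univ_eq_sum_range (fun i => Jcoef n m ((n : ℤ) + 2 - m) ((i : ℤ) + 1))]
  obtain _ | b := m
  · refine (Finset.sum_eq_zero fun i _ => ?_).trans (by simp)
    rw [Jcoef_critical hmn, if_neg (by omega)]
  have hrange : Finset.range n = Finset.range ((n - b) + b) := by congr 1; omega
  have hrhs : ((b + 1 : ℕ) : ℝ) * ((b + 1 : ℕ) - 1) / 2 = b * (b + 1) / 2 := by push_cast; ring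
  rw [hrange, hrhs, ← sum_range_ramp (n - b) b]
  refine Finset.sum_congr rfl fun i hi => ?_
  rw [Finset.mem_range] at hi
  rw [Jcoef_critical hmn]
  split_ifs <;> first | omega | (push_cast [Nat.cast_sub (by omega : b ≤ n)]; ring)

end

theorem weighted_divergence_J_vanishes_general (n m : ℕ) (hm : m ≤ n + 1)
    (r : ℤ)
    (q : Fin n → ℝ) (hq : qe n q (n : ℤ) ≠ 0) :
    (∑ j : Fin n, pd n j (fun y => Jcomp n m r y ((j : ℤ) + 1)) q)
      - ((m : ℝ) / 2) * (qe n q (n : ℤ))⁻¹ * Jcomp n m r q (n : ℤ) = 0 := by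
  simp only [pd_Jcomp_diag]
  rw [Jcomp_eq_Jcoef_mul_qe]
  rcases eq_or_ne r 1 with rfl | hr1
  · simp [Jcoef]
  by_cases hcrit : (m : ℤ) + r = n + 2
  · have hmn : m ≤ n := by omega
    obtain rfl : r = n + 2 - m := by omega
    have htop : (m : ℤ) + (n + 2 - m) - n - 2 + n = n := by ring
    simp only [if_pos hcrit]
    rw [sum_Jcoef_critical hmn, htop]
    linear_combination (-(m / 2 : ℝ) * Jcoef n m (n + 2 - m) n) * inv_mul_cancel₀ hq
      - (1 / 2 : ℝ) * mul_Jcoef_critical_top hmn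
  · simp only [if_neg hcrit, Finset.sum_const_zero, zero_sub, neg_eq_zero]
    rcases eq_or_ne m 0 with rfl | hm0
    · simp
    · simp [Jcoef_top_eq_zero hm0 hcrit]

/-- For `r ∈ I_1^m ∪ I_2^m` and `q_n ≠ 0`, the weighted
divergence of `J_r` vanishes:
`Σ_j ∂J_r^j/∂q_j − (m/2) q_n⁻¹ J_r^n = 0`. -/
theorem weighted_divergence_J_vanishes (n m : ℕ) (hn : 1 ≤ n) (hm : m ≤ n + 1)
    (r : ℤ) (hr : inI1 n m r ∨ inI2 n m r)
    (q : Fin n → ℝ) (hq : qe n q (n : ℤ) ≠ 0) :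
    (∑ j : Fin n, pd n j (fun y => Jcomp n m r y ((j : ℤ) + 1)) q)
      - ((m : ℝ) / 2) * (qe n q (n : ℤ))⁻¹ * Jcomp n m r q (n : ℤ) = 0 :=
  weighted_divergence_J_vanishes_general n m hm r q hq

end P3
end
end

section
/- For every γ ∈ {0,…,n+1}, every r ∈ {1,…,n}, and every q with q_n ≠ 0, the weighted divergence of the basic separable vector potential P_r^{(γ)} satisfies: Σ_{j=1}^n ∂(P_r^{(γ)})^j/∂q_j − (m/2) q_n^{−1} (P_r^{(γ)})^n = (γ − m/2) V_r^{(γ−1)}. -/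
/-!
Write `Q(z) = ∑_{k=0}^n q_k z^k`, `h = 1/Q` and `C = 1/Q²`, with coefficients `h_t`, `C_t` (zero for
`t < 0`). For `α ≥ 0` the recursion defining `V^{(α)}` is solved by
`V_k^{(α)} = -∑_{d<k} q_d h_{α+k-n-d}`, and `∂Q/∂q_j = z^j` gives `∂h_t/∂q_j = -C_{t-j}`.
Hence `div V^{(α)} = ∑_{d≤n} (n - d) q_d C_{α-n-d}`, which Euler's identity `z (1/Q)' = -z Q'/Q²`
turns into `α h_{α-n}`. Expanding `P_r^{(γ)} = -∑_{s<r} q_s V^{(r+γ-s-1)}` by the product rule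
then yields `div P_r^{(γ)} = γ V_r^{(γ-1)}`, while `Q h = 1` yields
`(P_r^{(γ)})^n = q_n V_r^{(γ-1)}`.
-/

noncomputable section

open scoped BigOperators

namespace P3

open Finset PowerSeries

lemma sum_range_sum_range {R : Type*} [CommRing R] (f : ℕ → R) (N : ℕ) :
    ∑ i ∈ range N, ∑ d ∈ range i, f d = ∑ d ∈ range N, ((N : R) - 1 - d) * f d := by
  induction N with
  | zero => simp
  | succ N ih =>
    rw [sum_range_succ, ih, sum_range_succ, ← sum_add_distrib]
    push_cast
    simp only [add_sub_cancel_right, sub_self, zero_mul, add_zero]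
    exact sum_congr rfl fun d _ => by ring

lemma sum_range_sum_range_succ {R : Type*} [CommRing R] (f : ℕ → R) (N : ℕ) :
    ∑ i ∈ range N, ∑ d ∈ range (i + 1), f d = ∑ d ∈ range (N + 1), ((N : R) - d) * f d := by
  simpa using (sum_range_succ' (fun i => ∑ d ∈ range i, f d) N).symm.trans (sum_range_sum_range f _)

section CoeffZ

variable {R : Type*} [CommSemiring R]

lemma coeff_X_mul_derivative (f : R⟦X⟧) (k : ℕ) : coeff k (X * d⁄dX R f) = k * coeff k f := by
  cases k with
  | zero => simp
  | succ k => rw [coeff_succ_X_mul, coeff_derivative, mul_comm]; push_cast; rfl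

def coeffZ (f : R⟦X⟧) (t : ℤ) : R := if 0 ≤ t then coeff t.toNat f else 0

lemma coeffZ_of_neg (f : R⟦X⟧) {t : ℤ} (ht : t < 0) : coeffZ f t = 0 := if_neg (by omega)

@[simp] lemma coeffZ_natCast (f : R⟦X⟧) (k : ℕ) : coeffZ f k = coeff k f := by
  simp [coeffZ]

lemma coeffZ_one (t : ℤ) : coeffZ (1 : R⟦X⟧) t = if t = 0 then 1 else 0 := by
  rcases lt_or_ge t 0 with ht | ht
  · rw [coeffZ_of_neg _ ht, if_neg ht.ne]
  · obtain ⟨e, rfl⟩ := Int.eq_ofNat_of_zero_le ht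
    simp [coeff_one]

lemma sum_range_coeff_mul_coeffZ (f g : R⟦X⟧) (t : ℤ) (K : ℕ)
    (hK : ∀ k : ℕ, K ≤ k → (k : ℤ) ≤ t → coeff k g = 0) :
    ∑ s ∈ range K, coeff s g * coeffZ f (t - s) = coeffZ (g * f) t := by
  rcases lt_or_ge t 0 with ht | ht
  · rw [coeffZ_of_neg _ ht]
    exact sum_eq_zero fun s _ => by rw [coeffZ_of_neg _ (by omega), mul_zero]
  obtain ⟨e, rfl⟩ := Int.eq_ofNat_of_zero_le ht
  rw [coeffZ_natCast, coeff_mul, Nat.sum_antidiagonal_eq_sum_range_succ_mk,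
    ← sum_subset (range_subset_range.2 (min_le_left K (e + 1))),
    ← sum_subset (range_subset_range.2 (min_le_right K (e + 1)))]
  · refine sum_congr rfl fun s hs => ?_
    simp only [mem_range] at hs
    rw [show (e : ℤ) - s = (e - s : ℕ) by omega, coeffZ_natCast]
  · intro s hs hs'
    simp only [mem_range] at hs hs'
    rw [hK s (by omega) (by omega), zero_mul]
  · intro s hs hs'
    simp only [mem_range] at hs hs'
    by_cases hse : s ≤ e
    · rw [hK s (by omega) (by omega), zero_mul]
    · rw [coeffZ_of_neg _ (by omega), mul_zero]

end CoeffZ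

def qSeries (n : ℕ) (q : Fin n → ℝ) : ℝ⟦X⟧ := PowerSeries.mk fun k => qe n q k

def hcoef (n : ℕ) (q : Fin n → ℝ) (t : ℤ) : ℝ := coeffZ (qSeries n q)⁻¹ t

def ccoef (n : ℕ) (q : Fin n → ℝ) (t : ℤ) : ℝ := coeffZ ((qSeries n q)⁻¹ ^ 2) t

section Coefficients

variable (n : ℕ) (q : Fin n → ℝ)

lemma qe_zero : qe n q 0 = 1 := by simp [qe]

lemma qe_eq_zero_of_lt {k : ℤ} (hk : (n : ℤ) < k) : qe n q k = 0 := by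
  rw [qe, dif_neg (by omega), if_neg (by omega)]

lemma coeff_qSeries (k : ℕ) : coeff k (qSeries n q) = qe n q k := coeff_mk _ _

lemma qSeries_mul_inv : qSeries n q * (qSeries n q)⁻¹ = 1 := by
  refine PowerSeries.mul_inv_cancel _ ?_
  rw [← coeff_zero_eq_constantCoeff_apply, coeff_qSeries, Nat.cast_zero, qe_zero]
  exact one_ne_zero

lemma hcoef_of_neg {t : ℤ} (ht : t < 0) : hcoef n q t = 0 := coeffZ_of_neg _ ht

lemma ccoef_of_neg {t : ℤ} (ht : t < 0) : ccoef n q t = 0 := coeffZ_of_neg _ ht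

lemma sum_qe_mul_hcoef (t : ℤ) (K : ℕ) (hK : (n : ℤ) < K ∨ t < K) :
    ∑ s ∈ range K, qe n q s * hcoef n q (t - s) = if t = 0 then 1 else 0 := by
  rw [← coeffZ_one, ← qSeries_mul_inv n q, ← sum_range_coeff_mul_coeffZ _ _ _ K]
  · simp only [coeff_qSeries, hcoef]
  · intro k hk hkt
    rw [coeff_qSeries, qe_eq_zero_of_lt n q (by omega)]

lemma sum_qe_mul_ccoef (t : ℤ) :
    ∑ s ∈ range (n + 1), qe n q s * ccoef n q (t - s) = hcoef n q t := by
  have hQ : qSeries n q * (qSeries n q)⁻¹ ^ 2 = (qSeries n q)⁻¹ := by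
    rw [sq, ← mul_assoc, qSeries_mul_inv, one_mul]
  rw [hcoef, ← hQ, ← sum_range_coeff_mul_coeffZ _ _ _ (n + 1)]
  · simp only [coeff_qSeries, ccoef]
  · intro k hk _
    rw [coeff_qSeries, qe_eq_zero_of_lt n q (by omega)]

lemma sum_weighted_qe_mul_ccoef (t : ℤ) :
    ∑ s ∈ range (n + 1), ((n : ℝ) - s) * (qe n q s * ccoef n q (t - s))
      = (n + t) * hcoef n q t := by
  simp only [ccoef, hcoef]
  set Q := qSeries n q
  -- Euler's identity `z (1/Q)' = -z Q' / Q²`, paired with `n Q / Q² = n / Q`.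
  have euler : ((n : ℝ) • Q - X * d⁄dX ℝ Q) * Q⁻¹ ^ 2 = (n : ℝ) • Q⁻¹ + X * d⁄dX ℝ Q⁻¹ := by
    rw [derivative_inv', sub_mul, smul_mul_assoc, sq, ← mul_assoc Q, qSeries_mul_inv, one_mul]
    ring
  have hcoeff : ∀ k : ℕ, coeff k ((n : ℝ) • Q - X * d⁄dX ℝ Q) = ((n : ℝ) - k) * qe n q k := by
    intro k
    rw [map_sub, coeff_smul, coeff_X_mul_derivative, coeff_qSeries, smul_eq_mul]
    ring
  have hrhs : coeffZ ((n : ℝ) • Q⁻¹ + X * d⁄dX ℝ Q⁻¹) t = (n + t) * coeffZ Q⁻¹ t := by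
    rcases lt_or_ge t 0 with ht | ht
    · rw [coeffZ_of_neg _ ht, coeffZ_of_neg _ ht, mul_zero]
    obtain ⟨e, rfl⟩ := Int.eq_ofNat_of_zero_le ht
    rw [coeffZ_natCast, coeffZ_natCast, map_add, coeff_smul, coeff_X_mul_derivative, smul_eq_mul]
    push_cast
    ring
  rw [← hrhs, ← euler, ← sum_range_coeff_mul_coeffZ _ _ _ (n + 1)]
  · simp only [hcoeff, mul_assoc]
  · intro k hk _
    rw [hcoeff, qe_eq_zero_of_lt n q (by omega), mul_zero]

lemma hcoef_zero : hcoef n q 0 = 1 := by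
  simpa [qe_zero] using sum_qe_mul_hcoef n q 0 1 (Or.inr one_pos)

lemma hcoef_eq_neg_sum {t : ℤ} (ht : t ≠ 0) :
    hcoef n q t = -∑ s ∈ range n, qe n q (s + 1) * hcoef n q (t - (s + 1)) := by
  have h := sum_qe_mul_hcoef n q t (n + 1) (Or.inl (by omega))
  rw [sum_range_succ', if_neg ht] at h
  push_cast at h
  rw [qe_zero, one_mul, sub_zero] at h
  linarith

lemma ccoef_eq_sub_sum (t : ℤ) :
    ccoef n q t = hcoef n q t - ∑ s ∈ range n, qe n q (s + 1) * ccoef n q (t - (s + 1)) := by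
  have h := sum_qe_mul_ccoef n q t
  rw [sum_range_succ'] at h
  push_cast at h
  rw [qe_zero, one_mul, sub_zero] at h
  linarith

end Coefficients

def Vsum (n : ℕ) (q : Fin n → ℝ) (α k : ℤ) : ℝ :=
  -∑ d ∈ range k.toNat, qe n q d * hcoef n q (α + k - n - d)

section ClosedForm

variable (n : ℕ) (q : Fin n → ℝ)

lemma Vsum_of_lt {α k : ℤ} (hα : α < n) (hk : 0 ≤ k) :
    Vsum n q α k = if α + k = n then -1 else 0 := by
  rw [Vsum, sum_qe_mul_hcoef n q _ _ (Or.inr (by omega)), apply_ite Neg.neg, neg_zero]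
  exact if_congr (by omega) rfl rfl

lemma Vsum_succ (α : ℤ) {k : ℤ} (hk : 0 ≤ k) :
    Vsum n q (α + 1) k = Vsum n q α (k + 1) - qe n q k * Vsum n q α 1 := by
  simp only [Vsum, show (k + 1).toNat = k.toNat + 1 by omega, sum_range_succ, Int.toNat_one,
    Nat.cast_zero, qe_zero, Int.toNat_of_nonneg hk]
  ring_nf

lemma Vsum_top {α : ℤ} (hα : 0 ≤ α) : Vsum n q α (n + 1) = 0 := by
  rw [Vsum, show ((n : ℤ) + 1).toNat = n + 1 by omega]
  simp only [show ∀ d : ℕ, α + (n + 1) - n - d = (α + 1) - d by intro d; ring]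
  rw [sum_qe_mul_hcoef n q _ _ (Or.inl (by omega)), if_neg (by omega), neg_zero]

lemma Vup_eq_Vsum (d : ℕ) {k : ℤ} (hk : 1 ≤ k) (hk' : k ≤ n + 1) :
    Vup n q d k = Vsum n q (n - 1 + d) k := by
  induction d generalizing k with
  | zero =>
    simp only [Vup, Vsum_of_lt n q (by omega : (n : ℤ) - 1 + (0 : ℕ) < n) (by omega : 0 ≤ k)]
    exact if_congr (by omega) rfl rfl
  | succ d ih =>
    simp only [Vup, Nat.cast_succ, ← add_assoc]
    split_ifs with hkn
    · rw [ih (by omega) (by omega), ih le_rfl (by omega), Vsum_succ n q _ (by omega)]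
    · rw [show k = n + 1 by omega, Vsum_top n q (by omega)]

lemma Vpot_eq_Vsum {α k : ℤ} (hα : 0 ≤ α) (hk : 1 ≤ k) (hk' : k ≤ n + 1) :
    Vpot n q α k = Vsum n q α k := by
  rw [Vpot, if_pos hα]
  by_cases hαn : α ≤ n - 1
  · rw [if_pos hαn, Vsum_of_lt n q (by omega) (by omega)]
    exact if_congr (by omega) rfl rfl
  · rw [if_neg hαn, Vup_eq_Vsum n q _ hk hk']
    congr 1
    omega

lemma Vsum_last (α : ℤ) :
    Vsum n q α n = qe n q n * hcoef n q (α - n) - if α = 0 then 1 else 0 := by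
  have h := sum_qe_mul_hcoef n q α (n + 1) (Or.inl (by omega))
  rw [sum_range_succ] at h
  rw [Vsum, Int.toNat_natCast]
  simp only [add_sub_cancel_right]
  linarith

lemma Vpot_neg_one {r : ℤ} (hr : 1 ≤ r) (hr' : r ≤ n) :
    Vpot n q (-1) r = qe n q (r - 1) * (qe n q n)⁻¹ := by
  simp only [Vpot, show ¬ (0 : ℤ) ≤ -1 by omega, if_false, show (-(-1 : ℤ)).toNat = 0 + 1 by rfl,
    Vdn, hr, hr', and_self, if_true]
  rw [if_neg (show ¬ r - 1 = n by omega)]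
  split_ifs <;> ring

end ClosedForm

section PartialDerivatives

variable {n : ℕ} (j : Fin n) {f g : (Fin n → ℝ) → ℝ} {x : Fin n → ℝ}

lemma pd_const (c : ℝ) : pd n j (fun _ => c) x = 0 := by simp [pd]

lemma pd_neg : pd n j (fun y => -f y) x = -pd n j f x := by simp [pd, fderiv_fun_neg]

lemma pd_mul (hf : DifferentiableAt ℝ f x) (hg : DifferentiableAt ℝ g x) :
    pd n j (fun y => f y * g y) x = pd n j f x * g x + f x * pd n j g x := by
  simp only [pd, fderiv_fun_mul hf hg, add_apply, smul_apply, smul_eq_mul]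
  ring

lemma pd_sum {ι : Type*} (s : Finset ι) {F : ι → (Fin n → ℝ) → ℝ}
    (hF : ∀ i ∈ s, DifferentiableAt ℝ (F i) x) :
    pd n j (fun y => ∑ i ∈ s, F i y) x = ∑ i ∈ s, pd n j (F i) x := by
  simp only [pd, fderiv_fun_sum hF, _root_.sum_apply]

end PartialDerivatives

section Derivatives

variable (n : ℕ)

lemma differentiable_qe (k : ℤ) : Differentiable ℝ fun y : Fin n → ℝ => qe n y k := by
  unfold qe
  split_ifs <;> fun_prop

lemma pd_qe (j : Fin n) (k : ℤ) (x : Fin n → ℝ) :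
    pd n j (fun y => qe n y k) x = if k = j + 1 then 1 else 0 := by
  by_cases hk : 1 ≤ k ∧ k ≤ n
  · simp only [qe, dif_pos hk]
    rw [pd, (hasFDerivAt_apply _ x).fderiv, ContinuousLinearMap.proj_apply, Pi.single_apply]
    exact if_congr (by rw [Fin.ext_iff]; simp only; omega) rfl rfl
  · simp only [qe, dif_neg hk]
    rw [pd_const, if_neg (by omega)]

lemma differentiable_hcoef (t : ℤ) : Differentiable ℝ fun y => hcoef n y t := by
  induction t using Int.strongRec (m := 0) with
  | lt t ht => simp only [hcoef_of_neg n _ ht]; fun_prop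
  | ge t ht ih =>
    rcases eq_or_lt_of_le ht with rfl | ht
    · simp only [hcoef_zero]; fun_prop
    simp only [hcoef_eq_neg_sum n _ ht.ne']
    have := fun s : ℕ => ih (t - (s + 1)) (by omega)
    have := differentiable_qe n
    fun_prop

/-- The coefficient form of `∂(1/Q)/∂q_k = -z^k/Q²`, with `k = j + 1`. -/
lemma pd_hcoef (j : Fin n) (t : ℤ) (x : Fin n → ℝ) :
    pd n j (fun y => hcoef n y t) x = -ccoef n x (t - (j + 1)) := by
  induction t using Int.strongRec (m := 0) with
  | lt t ht =>
    simp only [hcoef_of_neg n _ ht, pd_const, ccoef_of_neg n x (by omega : t - (j + 1) < 0),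
      neg_zero]
  | ge t ht ih =>
    rcases eq_or_lt_of_le ht with rfl | ht
    · simp only [hcoef_zero, pd_const, ccoef_of_neg n x (by omega : (0 : ℤ) - (j + 1) < 0),
        neg_zero]
    have hterm : ∀ s ∈ range n, pd n j (fun y => qe n y (s + 1) * hcoef n y (t - (s + 1))) x
        = (if s = (j : ℕ) then hcoef n x (t - (j + 1)) else 0)
          - qe n x (s + 1) * ccoef n x (t - (j + 1) - (s + 1)) := by
      intro s _
      rw [pd_mul j (differentiable_qe n _ x) (differentiable_hcoef n _ x), pd_qe,
        ih _ (by omega), sub_right_comm]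
      by_cases hs : s = (j : ℕ)
      · rw [if_pos (by omega), if_pos hs, hs]; ring
      · rw [if_neg (by omega), if_neg hs]; ring
    simp only [hcoef_eq_neg_sum n _ ht.ne']
    rw [pd_neg,
      pd_sum _ _ fun s _ => (differentiable_qe n _ x).fun_mul (differentiable_hcoef n _ x),
      sum_congr rfl hterm, sum_sub_distrib, sum_ite_eq' _ _ _, if_pos (mem_range.2 j.isLt),
      ccoef_eq_sub_sum n x]

lemma differentiable_Vsum (α k : ℤ) : Differentiable ℝ fun y => Vsum n y α k := by
  have := differentiable_qe n
  have := differentiable_hcoef n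
  unfold Vsum
  fun_prop

lemma pd_Vsum_diag (j : Fin n) (α : ℤ) (x : Fin n → ℝ) :
    pd n j (fun y => Vsum n y α (j + 1)) x
      = ∑ d ∈ range (j + 1), qe n x d * ccoef n x (α - n - d) := by
  have hterm : ∀ d ∈ range (j + 1),
      pd n j (fun y => qe n y d * hcoef n y (α + (j + 1) - n - d)) x
        = -(qe n x d * ccoef n x (α - n - d)) := by
    intro d hd
    rw [pd_mul j (differentiable_qe n _ x) (differentiable_hcoef n _ x), pd_qe, pd_hcoef,
      if_neg (by simp at hd; omega)]
    ring_nf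
  simp only [Vsum, show ((j : ℤ) + 1).toNat = j + 1 by omega]
  rw [pd_neg, pd_sum _ _ fun d _ => (differentiable_qe n _ x).fun_mul (differentiable_hcoef n _ x),
    sum_congr rfl hterm, sum_neg_distrib, neg_neg]

lemma divergence_Vsum (α : ℤ) (x : Fin n → ℝ) :
    ∑ j : Fin n, pd n j (fun y => Vsum n y α (j + 1)) x = α * hcoef n x (α - n) := by
  simp only [pd_Vsum_diag]
  rw [Fin.sum_univ_eq_sum_range (fun j => ∑ d ∈ range (j + 1), qe n x d * ccoef n x (α - n - d)),
    sum_range_sum_range_succ, sum_weighted_qe_mul_ccoef]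
  push_cast
  ring

lemma sum_pd_qe_mul {s : ℕ} (hs : s ≤ n) (F : ℤ → ℝ) (hF : F 0 = 0) (x : Fin n → ℝ) :
    ∑ j : Fin n, pd n j (fun y => qe n y s) x * F (j + 1) = F s := by
  simp only [pd_qe, ite_mul, one_mul, zero_mul]
  cases s with
  | zero => rw [sum_eq_zero fun j _ => if_neg (by omega), Nat.cast_zero, hF]
  | succ s =>
    have hne : ∀ j : Fin n, j ≠ ⟨s, by omega⟩ → ¬((s + 1 : ℕ) : ℤ) = j + 1 :=
      fun j hj h => hj (Fin.ext (by simp only; omega))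
    rw [sum_eq_single ⟨s, by omega⟩ (fun j _ hj => if_neg (hne j hj)) (by simp), if_pos (by simp)]
    simp

lemma divergence_qe_mul_Vsum {s : ℕ} (hs : s ≤ n) (α : ℤ) (x : Fin n → ℝ) :
    ∑ j : Fin n, pd n j (fun y => qe n y s * Vsum n y α (j + 1)) x
      = Vsum n x α s + qe n x s * (α * hcoef n x (α - n)) := by
  simp only [pd_mul _ (differentiable_qe n _ x) (differentiable_Vsum n _ _ x), sum_add_distrib,
    ← mul_sum, divergence_Vsum]
  rw [sum_pd_qe_mul n hs (fun k => Vsum n x α k) (by simp [Vsum])]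

end Derivatives

section VectorPotential

variable (n : ℕ)

lemma Ppot_eq_neg_sum_Vsum {γ : ℤ} (hγ : 0 ≤ γ) (r : ℤ) {k : ℤ} (hk : 1 ≤ k) (hk' : k ≤ n + 1)
    (y : Fin n → ℝ) :
    Ppot n y γ r k = -∑ s ∈ range r.toNat, qe n y s * Vsum n y (r + γ - s - 1) k := by
  rw [Ppot]
  congr 1
  refine sum_congr rfl fun s hs => ?_
  rw [Vpot_eq_Vsum n y (by simp at hs; omega) hk hk']

lemma divergence_Ppot_eq_Vsum {γ : ℤ} (hγ : 0 ≤ γ) {r : ℤ} (hr : 0 ≤ r) (hr' : r ≤ n)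
    (x : Fin n → ℝ) :
    ∑ j : Fin n, pd n j (fun y => Ppot n y γ r (j + 1)) x = γ * Vsum n x (γ - 1) r := by
  obtain ⟨R, rfl⟩ := Int.eq_ofNat_of_zero_le hr
  set X : ℕ → ℝ := fun d => qe n x d * hcoef n x (R + γ - 1 - n - d)
  have hpd : ∀ j : Fin n, pd n j (fun y => Ppot n y γ R (j + 1)) x
      = -∑ s ∈ range R, pd n j (fun y => qe n y s * Vsum n y (R + γ - s - 1) (j + 1)) x := by
    intro j
    simp only [Ppot_eq_neg_sum_Vsum n hγ _ (by omega : (1 : ℤ) ≤ j + 1) (by omega),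
      Int.toNat_natCast]
    rw [pd_neg,
      pd_sum _ _ fun s _ => (differentiable_qe n _ x).fun_mul (differentiable_Vsum n _ _ x)]
  have hV : ∀ s : ℕ, Vsum n x (R + γ - s - 1) s = -∑ d ∈ range s, X d := by
    intro s
    simp only [Vsum, Int.toNat_natCast, X]
    congr 1
    exact sum_congr rfl fun d _ => by ring_nf
  rw [sum_congr rfl fun j _ => hpd j, sum_neg_distrib, sum_comm,
    sum_congr rfl fun s hs => divergence_qe_mul_Vsum n (by simp at hs; omega) _ x]
  simp only [hV, sum_add_distrib, sum_neg_distrib, sum_range_sum_range]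
  rw [Vsum, Int.toNat_natCast, mul_neg, mul_sum, neg_add, neg_neg, ← sum_neg_distrib,
    ← sum_neg_distrib, ← sum_add_distrib]
  refine sum_congr rfl fun s _ => ?_
  simp only [X, show (R : ℤ) + γ - s - 1 - n = R + γ - 1 - n - s by ring,
    show γ - 1 + R - n - s = R + γ - 1 - n - s by ring]
  push_cast
  ring

lemma divergence_Ppot {γ : ℤ} (hγ : 0 ≤ γ) {r : ℤ} (hr : 1 ≤ r) (hr' : r ≤ n) (x : Fin n → ℝ) :
    ∑ j : Fin n, pd n j (fun y => Ppot n y γ r (j + 1)) x = γ * Vpot n x (γ - 1) r := by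
  rw [divergence_Ppot_eq_Vsum n hγ (by omega) hr']
  rcases eq_or_lt_of_le hγ with rfl | hγ
  · simp
  · rw [Vpot_eq_Vsum n x (by omega) hr (by omega)]

lemma Ppot_last {γ : ℤ} (hγ : 0 ≤ γ) {r : ℤ} (hr : 1 ≤ r) (hr' : r ≤ n) (q : Fin n → ℝ)
    (hq : qe n q n ≠ 0) :
    Ppot n q γ r n = qe n q n * Vpot n q (γ - 1) r := by
  obtain ⟨R, rfl⟩ : ∃ R : ℕ, r = R + 1 := ⟨r.toNat - 1, by omega⟩
  rw [Ppot_eq_neg_sum_Vsum n hγ _ (by omega) (by omega), show ((R : ℤ) + 1).toNat = R + 1 by omega]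
  simp only [Vsum_last]
  rcases eq_or_lt_of_le hγ with rfl | hγ
  · have hlow : ∀ s ∈ range R, qe n q s * (qe n q n * hcoef n q ((R + 1 : ℤ) + 0 - s - 1 - n)
        - if ((R : ℤ) + 1) + 0 - s - 1 = 0 then 1 else 0) = 0 := fun s hs => by
      rw [hcoef_of_neg n q (by simp at hs; omega), if_neg (by simp at hs; omega)]
      ring
    rw [sum_range_succ, sum_eq_zero hlow, hcoef_of_neg n q (by omega), if_pos (by omega),
      zero_sub, Vpot_neg_one n q hr hr', add_sub_cancel_right,
      mul_comm (qe n q R) (qe n q n)⁻¹, mul_inv_cancel_left₀ hq]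
    ring
  · rw [Vpot_eq_Vsum n q (by omega) hr (by omega), Vsum, show ((R : ℤ) + 1).toNat = R + 1 by omega,
      mul_neg, mul_sum]
    congr 1
    refine sum_congr rfl fun s hs => ?_
    rw [if_neg (by simp at hs; omega), sub_zero]
    ring_nf

end VectorPotential

theorem weighted_divergence_P_general (n m : ℕ)
    (γ : ℤ) (hγ : 0 ≤ γ ∧ γ ≤ (n : ℤ) + 1) (r : ℤ) (hr : 1 ≤ r ∧ r ≤ (n : ℤ))
    (q : Fin n → ℝ) (hq : qe n q (n : ℤ) ≠ 0) :
    (∑ j : Fin n, pd n j (fun y => Ppot n y γ r ((j : ℤ) + 1)) q)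
      - ((m : ℝ) / 2) * (qe n q (n : ℤ))⁻¹ * Ppot n q γ r (n : ℤ)
      = ((γ : ℝ) - (m : ℝ) / 2) * Vpot n q (γ - 1) r := by
  rw [divergence_Ppot n hγ.1 hr.1 hr.2, Ppot_last n hγ.1 hr.1 hr.2 q hq, mul_assoc _ _⁻¹,
    inv_mul_cancel_left₀ hq]
  ring

/-- The weighted divergence of the basic separable vector
potential `P_r^{(γ)}` equals `(γ − m/2) V_r^{(γ−1)}` on `{q_n ≠ 0}`. -/
theorem weighted_divergence_P (n m : ℕ) (hn : 1 ≤ n) (hm : m ≤ n + 1)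
    (γ : ℤ) (hγ : 0 ≤ γ ∧ γ ≤ (n : ℤ) + 1) (r : ℤ) (hr : 1 ≤ r ∧ r ≤ (n : ℤ))
    (q : Fin n → ℝ) (hq : qe n q (n : ℤ) ≠ 0) :
    (∑ j : Fin n, pd n j (fun y => Ppot n y γ r ((j : ℤ) + 1)) q)
      - ((m : ℝ) / 2) * (qe n q (n : ℤ))⁻¹ * Ppot n q γ r (n : ℤ)
      = ((γ : ℝ) - (m : ℝ) / 2) * Vpot n q (γ - 1) r :=
  weighted_divergence_P_general n m γ hγ r hr q hq

end P3
end
end
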